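/- For every total Boolean function f : {0,1}^n → {0,1} and every p ≥ 1, the deterministic p-parallel query complexity satisfies D^{p∥}(f) ≤ ⌈C^{(1)}(f)/p⌉ · bs(f). -/

import Mathlib

/-- `x` with the bits in `B` flipped. -/
def flipOn {n : ℕ} (x : Fin n → Bool) (B : Finset (Fin n)) : Fin n → Bool :=
  fun i => if i ∈ B then !(x i) else x i

/-- Block sensitivity of `f` at `x`. -/
noncomputable def bsAt {n : ℕ} (f : (Fin n → Bool) → Bool) (x : Fin n → Bool) : ℕ :=
  sSup {k | ∃ B : Fin k → Finset (Fin n), (∀ i, (B i).Nonempty) ∧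
    (∀ i j, i ≠ j → Disjoint (B i) (B j)) ∧ ∀ i, f (flipOn x (B i)) ≠ f x}

/-- Block sensitivity of `f`. -/
noncomputable def blockSensitivity {n : ℕ} (f : (Fin n → Bool) → Bool) : ℕ :=
  ⨆ x, bsAt f x

/-- Certificate complexity of `f` at `x`. -/
noncomputable def certAt {n : ℕ} (f : (Fin n → Bool) → Bool) (x : Fin n → Bool) : ℕ :=
  sInf {s | ∃ S : Finset (Fin n), S.card = s ∧ ∀ y, (∀ i ∈ S, y i = x i) → f y = f x}

/-- 1-certificate complexity: the max certificate complexity over 1-inputs. -/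
noncomputable def oneCert {n : ℕ} (f : (Fin n → Bool) → Bool) : ℕ :=
  sSup {s | ∃ x, f x = true ∧ certAt f x = s}

/-- `ComputesIn n p f T`: there is a deterministic algorithm computing `f` that in each
of `T` rounds adaptively queries at most `p` input bits in parallel. -/
inductive ComputesIn (n p : ℕ) : ((Fin n → Bool) → Bool) → ℕ → Prop
  | zero (f : (Fin n → Bool) → Bool) (b : Bool) (h : ∀ x, f x = b) : ComputesIn n p f 0
  | succ (f : (Fin n → Bool) → Bool) (T : ℕ) (Q : Finset (Fin n)) (hQ : Q.card ≤ p)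
      (g : ((i : Fin n) → i ∈ Q → Bool) → (Fin n → Bool) → Bool)
      (hrec : ∀ a, ComputesIn n p (g a) T)
      (hval : ∀ x, f x = g (fun i _ => x i) x) : ComputesIn n p f (T + 1)

/-- Deterministic `p`-parallel query complexity. -/
noncomputable def Dpar (n p : ℕ) (f : (Fin n → Bool) → Bool) : ℕ :=
  sInf {T | ComputesIn n p f T}

/-!
Beals et al.: if `h` takes the value `1` at some `z`, query a certificate `S` of `h` at `z`
(at most `⌈C⁽¹⁾(h)/p⌉` rounds) and recurse on the restriction of `h` to the answers. A `0`-input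
`y` of the restriction is a `0`-input of `h`, and the set of positions in `S` where `y` differs
from `z` is a sensitive block of `h` at `y`. It is disjoint from the sensitive blocks of the
restriction, which may be taken off `S` because the restriction ignores the bits in `S`. Hence
the number of disjoint sensitive blocks at `0`-inputs drops in every phase, and after `bs(h)`
phases the function is constant.
-/

open Finset Function

variable {n : ℕ}

def IsCertificate (h : (Fin n → Bool) → Bool) (z : Fin n → Bool) (S : Finset (Fin n)) : Prop :=
  ∀ w, (∀ i ∈ S, w i = z i) → h w = h z

structure IsSensitiveBlockFamily {k : ℕ} (h : (Fin n → Bool) → Bool) (x : Fin n → Bool)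
    (B : Fin k → Finset (Fin n)) : Prop where
  pairwise_disjoint : Pairwise (Disjoint on B)
  flipOn_ne : ∀ i, h (flipOn x (B i)) ≠ h x

theorem Nat.le_add_sub_one_div_mul {C p : ℕ} (hp : 0 < p) : C ≤ (C + p - 1) / p * p := by
  have := Nat.lt_div_mul_add (a := C + p - 1) hp
  omega

theorem Fin.pairwise_disjoint_snoc {α : Type*} [SemilatticeInf α] [OrderBot α] {k : ℕ}
    {f : Fin k → α} {a : α} (hf : Pairwise (Disjoint on f)) (ha : ∀ i, Disjoint (f i) a) :
    Pairwise (Disjoint on (Fin.snoc f a : Fin (k + 1) → α)) := by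
  intro i j hij
  induction i using Fin.lastCases with
  | last =>
    induction j using Fin.lastCases with
    | last => exact absurd rfl hij
    | cast j => simpa [onFun] using (ha j).symm
  | cast i =>
    induction j using Fin.lastCases with
    | last => simpa [onFun] using ha i
    | cast j => simpa [onFun] using hf fun hij' => hij (congrArg _ hij')

theorem Finset.piecewise_piecewise_sdiff {ι : Type*} [DecidableEq ι] {π : ι → Sort*}
    {s t : Finset ι} (hst : s ⊆ t) (f g h : ∀ i, π i) :
    t.piecewise (s.piecewise f g) h = s.piecewise f ((t \ s).piecewise g h) := by
  ext i
  by_cases his : i ∈ s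
  · simp [his, hst his]
  · by_cases hit : i ∈ t <;> simp [his, hit]

namespace ComputesIn

variable {p : ℕ} {f : (Fin n → Bool) → Bool} {T : ℕ}

theorem mono {T' : ℕ} (hle : T ≤ T') (hf : ComputesIn n p f T) : ComputesIn n p f T' := by
  induction hle with
  | refl => exact hf
  | step _ ih => exact succ f _ ∅ (by simp) (fun _ => f) (fun _ => ih) (fun _ => rfl)

theorem of_forall_eq {b : Bool} (T : ℕ) (hf : ∀ x, f x = b) : ComputesIn n p f T :=
  (zero f b hf).mono T.zero_le

theorem succ_of_query {Q : Finset (Fin n)} (hQ : #Q ≤ p)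
    (hrec : ∀ x, ComputesIn n p (fun y => f (Q.piecewise x y)) T) :
    ComputesIn n p f (T + 1) :=
  succ f T Q hQ (fun a y => f (Q.piecewise (fun i => if hi : i ∈ Q then a i hi else false) y))
    (fun _ => hrec _) fun x => by
      congr 1
      ext i
      by_cases hi : i ∈ Q <;> simp [hi]

theorem add_of_query (r : ℕ) {Q : Finset (Fin n)} (hQ : #Q ≤ r * p)
    (hrec : ∀ x, ComputesIn n p (fun y => f (Q.piecewise x y)) T) :
    ComputesIn n p f (T + r) := by
  induction r generalizing Q f with
  | zero =>
    rw [Nat.zero_mul, Nat.le_zero, card_eq_zero] at hQ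
    subst hQ
    simpa only [piecewise_empty, Nat.add_zero] using hrec default
  | succ r ih =>
    obtain ⟨Q₁, hQ₁Q, hQ₁⟩ := exists_subset_card_eq (min_le_right p #Q)
    refine succ_of_query (hQ₁.trans_le (min_le_left _ _)) fun a => ih (Q := Q \ Q₁) ?_ fun x => ?_
    · rw [card_sdiff_of_subset hQ₁Q, hQ₁]
      rw [Nat.succ_mul] at hQ
      omega
    · simpa only [piecewise_piecewise_sdiff hQ₁Q] using hrec (Q₁.piecewise a x)

end ComputesIn

section Blocks

variable {h : (Fin n → Bool) → Bool}

theorem nonempty_of_flipOn_ne {x : Fin n → Bool} {A : Finset (Fin n)}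
    (hA : h (flipOn x A) ≠ h x) : A.Nonempty := by
  rw [nonempty_iff_ne_empty]
  rintro rfl
  exact hA (congrArg h (funext fun i => if_neg (notMem_empty i)))

theorem IsCertificate.piecewise {S T : Finset (Fin n)} {x z : Fin n → Bool}
    (hT : IsCertificate h (S.piecewise x z) T) :
    IsCertificate (fun y => h (S.piecewise x y)) z T := fun w hw =>
  hT _ fun i hi => by by_cases hiS : i ∈ S <;> simp [hiS, hw i hi]

theorem flipOn_filter_ne_eq_of_mem {S : Finset (Fin n)} (y z : Fin n → Bool) {i : Fin n}
    (hi : i ∈ S) : flipOn y {j ∈ S | y j ≠ z j} i = z i := by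
  unfold flipOn
  cases hy : y i <;> cases hz : z i <;> simp [hi, hy, hz]

theorem exists_subset_flipOn_ne_of_isCertificate {S : Finset (Fin n)} {y z : Fin n → Bool}
    (hz : h z = true) (hS : IsCertificate h z S) (hy : h y = false) :
    ∃ A ⊆ S, h (flipOn y A) ≠ h y :=
  ⟨_, filter_subset _ S, by
    rw [hS _ fun i hi => flipOn_filter_ne_eq_of_mem y z hi, hz, hy]
    decide⟩

theorem flipOn_piecewise_sdiff (S A : Finset (Fin n)) (x y : Fin n → Bool) :
    flipOn (S.piecewise x y) (A \ S) = S.piecewise x (flipOn y A) := by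
  ext i
  by_cases hiS : i ∈ S <;> simp [flipOn, hiS]

variable {k : ℕ} {x : Fin n → Bool} {B : Fin k → Finset (Fin n)}

namespace IsSensitiveBlockFamily

theorem nonempty (hB : IsSensitiveBlockFamily h x B) (i : Fin k) : (B i).Nonempty :=
  nonempty_of_flipOn_ne (hB.flipOn_ne i)

theorem snoc {A : Finset (Fin n)} (hB : IsSensitiveBlockFamily h x B)
    (hBA : ∀ i, Disjoint (B i) A) (hA : h (flipOn x A) ≠ h x) :
    IsSensitiveBlockFamily h x (Fin.snoc B A : Fin (k + 1) → Finset (Fin n)) where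
  pairwise_disjoint := Fin.pairwise_disjoint_snoc hB.pairwise_disjoint hBA
  flipOn_ne i := by
    induction i using Fin.lastCases
    · simpa only [Fin.snoc_last] using hA
    · simpa only [Fin.snoc_castSucc] using hB.flipOn_ne _

theorem sdiff_of_piecewise {S : Finset (Fin n)} {y : Fin n → Bool}
    (hB : IsSensitiveBlockFamily (fun w => h (S.piecewise x w)) y B) :
    IsSensitiveBlockFamily h (S.piecewise x y) (fun i => B i \ S) where
  pairwise_disjoint _ _ hij := (hB.pairwise_disjoint hij).mono sdiff_subset sdiff_subset
  flipOn_ne i := by simpa only [flipOn_piecewise_sdiff] using hB.flipOn_ne i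

theorem card_le (hB : IsSensitiveBlockFamily h x B) : k ≤ n :=
  calc k = #(univ : Finset (Fin k)) := by simp
    _ ≤ #(univ.biUnion B) :=
      card_le_card_biUnion (hB.pairwise_disjoint.set_pairwise _) fun i _ => hB.nonempty i
    _ ≤ n := (card_le_univ _).trans_eq (Fintype.card_fin n)

end IsSensitiveBlockFamily

end Blocks

theorem ComputesIn.of_isCertificate_of_isSensitiveBlockFamily {p r C : ℕ} (hC : C ≤ r * p)
    (k : ℕ) {h : (Fin n → Bool) → Bool}
    (hcert : ∀ z, h z = true → ∃ S, #S ≤ C ∧ IsCertificate h z S)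
    (hblocks : ∀ y, h y = false → ∀ B : Fin (k + 1) → Finset (Fin n),
      ¬ IsSensitiveBlockFamily h y B) :
    ComputesIn n p h (r * k) := by
  induction k generalizing h with
  | zero =>
    obtain ⟨z, hz⟩ | hfalse := em (∃ z, h z = true)
    · obtain ⟨S, -, hS⟩ := hcert z hz
      refine .of_forall_eq _ (b := true) fun y => ?_
      by_contra hy
      rw [Bool.not_eq_true] at hy
      obtain ⟨A, -, hA⟩ := exists_subset_flipOn_ne_of_isCertificate hz hS hy
      exact hblocks y hy (fun _ => A)
        ⟨fun i j hij => hij (Subsingleton.elim (α := Fin 1) i j) |>.elim, fun _ => hA⟩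
    · exact .of_forall_eq _ (by simpa using hfalse)
  | succ k ih =>
    obtain ⟨z, hz⟩ | hfalse := em (∃ z, h z = true)
    · obtain ⟨S, hSC, hS⟩ := hcert z hz
      rw [Nat.mul_succ]
      refine .add_of_query r (hSC.trans hC) fun x => ih (fun z' hz' => ?_) fun y hy B hB => ?_
      · obtain ⟨T, hTC, hT⟩ := hcert _ hz'
        exact ⟨T, hTC, hT.piecewise⟩
      · obtain ⟨A, hAS, hA⟩ := exists_subset_flipOn_ne_of_isCertificate hz hS hy
        exact hblocks _ hy _ (hB.sdiff_of_piecewise.snoc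
          (fun _ => sdiff_disjoint.mono_right hAS) hA)
    · exact .of_forall_eq _ (by simpa using hfalse)

section ComplexityMeasures

variable (h : (Fin n → Bool) → Bool)

theorem isCertificate_univ (z : Fin n → Bool) : IsCertificate h z univ := fun _ hw =>
  congrArg h (funext fun i => hw i (mem_univ i))

theorem exists_isCertificate_card_eq_certAt (z : Fin n → Bool) :
    ∃ S, #S = certAt h z ∧ IsCertificate h z S := by
  unfold certAt
  exact Nat.sInf_mem (s := {s | ∃ S : Finset (Fin n), #S = s ∧ IsCertificate h z S})
    ⟨_, univ, rfl, isCertificate_univ h z⟩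

theorem certAt_le (z : Fin n → Bool) : certAt h z ≤ n := by
  unfold certAt
  refine (Nat.sInf_le ?_).trans_eq (card_fin n)
  exact ⟨univ, rfl, isCertificate_univ h z⟩

theorem certAt_le_oneCert {z : Fin n → Bool} (hz : h z = true) : certAt h z ≤ oneCert h :=
  le_csSup ⟨n, by rintro _ ⟨w, -, rfl⟩; exact certAt_le h w⟩ ⟨z, hz, rfl⟩

theorem bsAt_eq_sSup (x : Fin n → Bool) :
    bsAt h x = sSup {k | ∃ B : Fin k → Finset (Fin n), IsSensitiveBlockFamily h x B} := by
  unfold bsAt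
  congr
  ext k
  exact ⟨fun ⟨B, _, hdis, hsens⟩ => ⟨B, fun i j => hdis i j, hsens⟩,
    fun ⟨B, hB⟩ => ⟨B, hB.nonempty, fun _ _ hij => hB.pairwise_disjoint hij, hB.flipOn_ne⟩⟩

end ComplexityMeasures

theorem IsSensitiveBlockFamily.le_blockSensitivity {h : (Fin n → Bool) → Bool} {k : ℕ}
    {x : Fin n → Bool} {B : Fin k → Finset (Fin n)} (hB : IsSensitiveBlockFamily h x B) :
    k ≤ blockSensitivity h := by
  have hbound : ∀ x, n ∈ upperBounds
      {k | ∃ B : Fin k → Finset (Fin n), IsSensitiveBlockFamily h x B} :=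
    fun _ _ ⟨_, hB⟩ => hB.card_le
  calc k ≤ bsAt h x := (bsAt_eq_sSup h x).symm ▸ le_csSup ⟨n, hbound x⟩ ⟨B, hB⟩
    _ ≤ blockSensitivity h := le_ciSup ⟨n, by
        rintro _ ⟨y, rfl⟩
        exact (bsAt_eq_sSup h y).symm ▸ csSup_le' (hbound y)⟩ x

theorem stmt_8 {n : ℕ} (p : ℕ) (hp : 1 ≤ p) (f : (Fin n → Bool) → Bool) :
    Dpar n p f ≤ ((oneCert f + p - 1) / p) * blockSensitivity f := by
  refine Nat.sInf_le (ComputesIn.of_isCertificate_of_isSensitiveBlockFamily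
    (Nat.le_add_sub_one_div_mul hp) _ (fun z hz => ?_) fun _ _ _ hB => ?_)
  · obtain ⟨S, hS, hcert⟩ := exists_isCertificate_card_eq_certAt f z
    exact ⟨S, hS ▸ certAt_le_oneCert f hz, hcert⟩
  · exact Nat.not_succ_le_self _ hB.le_blockSensitivity
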